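/- arXiv:1005.2053 — 2 statements merged into one kernel-verified Lean document; each statement's English description precedes it below -/
import Mathlib

section
/- Let p_i(z) = z^i + \sum_{k\ge 1} H^i_k z^{-k} (i = 0,1,2,...) with H^0_j = 0 for all j \ge 1. Then the equations p_j p_k = \sum_l C^l_{jk} p_l with C^l_{jk} = \delta^l_{j+k} + H^k_{j-l} + H^j_{k-l} hold for all j,k if and only if for all j,k,m \ge 1: H^{j+k}_m - H^j_{m+k} - H^k_{j+m} + \sum_{l=1}^{j-1} H^k_{j-l} H^l_m + \sum_{l=1}^{k-1} H^j_{k-l} H^l_m - \sum_{l=1}^{m-1} H^k_{m-l} H^j_l = 0. -/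
/-!
In the variable `X = z⁻¹` every `p_l` is `X^{-l}` plus a power series without constant term.
Hence the coefficient of `z^t`, `0 ≤ t ≤ j + k`, in `p_j p_k` is
`δ^t_{j+k} + H^k_{j-t} + H^j_{k-t} = C^t_{jk}` (and it is `0` for `t > j + k`); the same holds
for `∑_l C^l_{jk} p_l`, so the two sides always agree in nonnegative powers of `z`. In the power
`z^{-m}`, `m ≥ 1`, their difference is the associativity expression (the term `l = 0` of
`∑_l C^l_{jk} H^l_m` drops out because `H^0_m = 0`), and that expression vanishes identically
when `j = 0` or `k = 0`.
-/

/-- The basis elements `p_i(z) = z^i + ∑_{k ≥ 1} H^i_k z^{-k}` of the big cell, encoded as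
formal Laurent series in the variable `X = z⁻¹` (so `z^i` becomes `single (-i) 1`). -/
noncomputable def pBigCell (H : ℕ → ℕ → ℂ) (i : ℕ) : LaurentSeries ℂ :=
  HahnSeries.single (-(i : ℤ)) 1 +
    HahnSeries.ofPowerSeries ℤ ℂ (PowerSeries.mk fun k => if k = 0 then 0 else H i k)

/-- Extension of `H` by the convention `H^i_m = 0` for `m ≤ 0`. -/
noncomputable def Hext (H : ℕ → ℕ → ℂ) (i : ℕ) (m : ℤ) : ℂ :=
  if 0 < m then H i m.toNat else 0

namespace BigCell

open HahnSeries

variable (H : ℕ → ℕ → ℂ)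

noncomputable def tail (i : ℕ) : PowerSeries ℂ :=
  PowerSeries.mk fun k => if k = 0 then 0 else H i k

noncomputable def structConst (j k l : ℕ) : ℂ :=
  (if l = j + k then 1 else 0) + Hext H k ((j : ℤ) - l) + Hext H j ((k : ℤ) - l)

noncomputable def structSum (j k : ℕ) : LaurentSeries ℂ :=
  ∑ l ∈ Finset.range (j + k + 1), structConst H j k l • pBigCell H l

noncomputable def assocDefect (j k m : ℕ) : ℂ :=
  H (j + k) m - H j (m + k) - H k (j + m)
    + ∑ l ∈ Finset.Ico 1 j, H k (j - l) * H l m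
    + ∑ l ∈ Finset.Ico 1 k, H j (k - l) * H l m
    - ∑ l ∈ Finset.Ico 1 m, H k (m - l) * H j l

lemma pBigCell_eq (i : ℕ) :
    pBigCell H i = single (-(i : ℤ)) 1 + ofPowerSeries ℤ ℂ (tail H i) := rfl

lemma coeff_ofPowerSeries_tail (i : ℕ) (n : ℤ) :
    (ofPowerSeries ℤ ℂ (tail H i)).coeff n = Hext H i n := by
  rw [PowerSeries.coeff_coe, tail, PowerSeries.coeff_mk, Hext]
  split_ifs <;> first | rfl | omega | (congr 1; omega)

lemma coeff_pBigCell (i : ℕ) (n : ℤ) :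
    (pBigCell H i).coeff n = (if n = -(i : ℤ) then 1 else 0) + Hext H i n := by
  simp only [pBigCell_eq, coeff_add, coeff_single, coeff_ofPowerSeries_tail]
  congr

lemma coeff_tail_mul (j k m : ℕ) :
    PowerSeries.coeff m (tail H j * tail H k) = ∑ l ∈ Finset.Ico 1 m, H k (m - l) * H j l := by
  rw [PowerSeries.coeff_mul, Finset.Nat.sum_antidiagonal_eq_sum_range_succ_mk]
  symm
  apply Finset.sum_subset_zero_on_sdiff
  · intro l hl
    simp only [Finset.mem_Ico, Finset.mem_range] at hl ⊢
    omega
  · intro l hl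
    simp only [Finset.mem_sdiff, Finset.mem_Ico, Finset.mem_range] at hl
    obtain rfl | rfl : l = 0 ∨ l = m := by omega
    all_goals simp [tail]
  · intro l hl
    simp only [Finset.mem_Ico] at hl
    simp [tail, Nat.pos_iff_ne_zero.mp hl.1, show m - l ≠ 0 by omega, mul_comm]

lemma Hext_natCast {m : ℕ} (hm : 0 < m) (i : ℕ) : Hext H i m = H i m := by
  simp [Hext, hm]

lemma Hext_of_nonpos {n : ℤ} (hn : n ≤ 0) (i : ℕ) : Hext H i n = 0 := by
  simp [Hext, hn]

lemma coeff_pBigCell_mul (j k : ℕ) (n : ℤ) :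
    (pBigCell H j * pBigCell H k).coeff n =
      (if n = -((j + k : ℕ) : ℤ) then 1 else 0) + Hext H k (n + j) + Hext H j (n + k)
        + (ofPowerSeries ℤ ℂ (tail H j * tail H k)).coeff n := by
  rw [pBigCell_eq, pBigCell_eq, add_mul, mul_add, mul_add, single_mul_single, ← map_mul]
  simp only [coeff_add, coeff_single_mul, coeff_mul_single, coeff_ofPowerSeries_tail, coeff_single,
    one_mul, mul_one, sub_neg_eq_add]
  rw [Nat.cast_add, neg_add, ← add_assoc]
  congr

lemma coeff_sum_smul_pBigCell (c : ℕ → ℂ) (s : Finset ℕ) (n : ℤ) :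
    (∑ l ∈ s, c l • pBigCell H l).coeff n =
      ∑ l ∈ s, c l * ((if n = -(l : ℤ) then 1 else 0) + Hext H l n) := by
  simp only [coeff_sum, coeff_smul, coeff_pBigCell, smul_eq_mul]

lemma coeff_pBigCell_mul_neg (j k t : ℕ) :
    (pBigCell H j * pBigCell H k).coeff (-t) = if t ≤ j + k then structConst H j k t else 0 := by
  have htail : (ofPowerSeries ℤ ℂ (tail H j * tail H k)).coeff (-t) = 0 := by
    rw [PowerSeries.coeff_coe]
    split_ifs with hneg
    · rfl
    · rw [show (-(t : ℤ)).natAbs = 0 by omega, coeff_tail_mul]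
      simp
  simp only [coeff_pBigCell_mul, htail, add_zero, structConst, neg_inj, Nat.cast_inj,
    neg_add_eq_sub]
  by_cases hle : t ≤ j + k
  · rw [if_pos hle]
  · rw [if_neg hle, if_neg (by omega), Hext_of_nonpos H (by omega), Hext_of_nonpos H (by omega)]
    simp

lemma coeff_structSum_neg (j k t : ℕ) :
    (structSum H j k).coeff (-t) =
      if t ≤ j + k then structConst H j k t else 0 := by
  have hterm : ∀ l ∈ Finset.range (j + k + 1),
      structConst H j k l * ((if -(t : ℤ) = -(l : ℤ) then 1 else 0) + Hext H l (-t)) =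
        if t = l then structConst H j k l else 0 := by
    intro l _
    rw [Hext_of_nonpos H (by omega), add_zero]
    simp only [neg_inj, Nat.cast_inj, mul_ite, mul_one, mul_zero]
  rw [structSum, coeff_sum_smul_pBigCell, Finset.sum_congr rfl hterm, Finset.sum_ite_eq]
  simp only [Finset.mem_range, Nat.lt_succ_iff]

lemma sum_range_Hext_sub_mul {g : ℕ → ℂ} (hg : g 0 = 0) {i j N : ℕ} (hjN : j ≤ N) :
    ∑ l ∈ Finset.range N, Hext H i ((j : ℤ) - l) * g l =
      ∑ l ∈ Finset.Ico 1 j, H i (j - l) * g l := by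
  symm
  apply Finset.sum_subset_zero_on_sdiff
  · intro l hl
    simp only [Finset.mem_Ico, Finset.mem_range] at hl ⊢
    omega
  · intro l hl
    simp only [Finset.mem_sdiff, Finset.mem_Ico, Finset.mem_range] at hl
    rcases Nat.eq_zero_or_pos l with rfl | hl0
    · rw [hg, mul_zero]
    · rw [Hext_of_nonpos H (by omega), zero_mul]
  · intro l hl
    simp only [Finset.mem_Ico] at hl
    rw [← Nat.cast_sub hl.2.le, Hext_natCast H (by omega)]

lemma coeff_structSum_sub_coeff_mul {m : ℕ} (hm0 : H 0 m = 0) (hm : 0 < m) (j k : ℕ) :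
    (structSum H j k).coeff m
      - (pBigCell H j * pBigCell H k).coeff m = assocDefect H j k m := by
  have hterm : ∀ l ∈ Finset.range (j + k + 1),
      structConst H j k l * ((if (m : ℤ) = -(l : ℤ) then 1 else 0) + Hext H l m) =
        (if l = j + k then H l m else 0) + Hext H k ((j : ℤ) - l) * H l m
          + Hext H j ((k : ℤ) - l) * H l m := by
    intro l _
    rw [if_neg (by omega), zero_add, Hext_natCast H hm, structConst]
    simp only [add_mul, ite_mul, one_mul, zero_mul]
  have hprod : (pBigCell H j * pBigCell H k).coeff m =
      H k (j + m) + H j (m + k) + ∑ l ∈ Finset.Ico 1 m, H k (m - l) * H j l := by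
    rw [coeff_pBigCell_mul, if_neg (by omega), zero_add, PowerSeries.coeff_coe, if_neg (by omega),
      Int.natAbs_natCast, coeff_tail_mul, ← Nat.cast_add, ← Nat.cast_add,
      Hext_natCast H (by omega), Hext_natCast H (by omega), add_comm m j]
  rw [structSum, coeff_sum_smul_pBigCell, Finset.sum_congr rfl hterm, Finset.sum_add_distrib,
    Finset.sum_add_distrib, Finset.sum_ite_eq', if_pos (by simp),
    sum_range_Hext_sub_mul H hm0 (by omega), sum_range_Hext_sub_mul H hm0 (by omega), hprod,
    assocDefect]
  ring

section

variable {H}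
variable (h0 : ∀ j : ℕ, 1 ≤ j → H 0 j = 0)
include h0

lemma assocDefect_zero_left {m : ℕ} (hm : 0 < m) (k : ℕ) : assocDefect H 0 k m = 0 := by
  have hk : ∑ l ∈ Finset.Ico 1 k, H 0 (k - l) * H l m = 0 :=
    Finset.sum_eq_zero fun l hl => by rw [h0 _ (by rw [Finset.mem_Ico] at hl; omega), zero_mul]
  have hm' : ∑ l ∈ Finset.Ico 1 m, H k (m - l) * H 0 l = 0 :=
    Finset.sum_eq_zero fun l hl => by rw [h0 _ (by rw [Finset.mem_Ico] at hl; omega), mul_zero]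
  simp [assocDefect, hk, hm', h0 (m + k) (by omega)]

lemma assocDefect_zero_right {m : ℕ} (hm : 0 < m) (j : ℕ) : assocDefect H j 0 m = 0 := by
  have hj : ∑ l ∈ Finset.Ico 1 j, H 0 (j - l) * H l m = 0 :=
    Finset.sum_eq_zero fun l hl => by rw [h0 _ (by rw [Finset.mem_Ico] at hl; omega), zero_mul]
  have hm' : ∑ l ∈ Finset.Ico 1 m, H 0 (m - l) * H j l = 0 :=
    Finset.sum_eq_zero fun l hl => by rw [h0 _ (by rw [Finset.mem_Ico] at hl; omega), zero_mul]
  simp [assocDefect, hj, hm', h0 (j + m) (by omega)]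

end

end BigCell

/-- with `H^0_j = 0`, the equations `p_j p_k = ∑_l C^l_{jk} p_l` with
`C^l_{jk} = δ^l_{j+k} + H^k_{j-l} + H^j_{k-l}` hold for all `j,k` iff the big-cell
associativity conditions hold for all `j,k,m ≥ 1`. -/
theorem bigcell_closure_iff_associativity (H : ℕ → ℕ → ℂ)
    (h0 : ∀ j : ℕ, 1 ≤ j → H 0 j = 0) :
    (∀ j k : ℕ,
      pBigCell H j * pBigCell H k =
        ∑ l ∈ Finset.range (j + k + 1),
          ((if l = j + k then 1 else 0)
            + Hext H k ((j : ℤ) - l) + Hext H j ((k : ℤ) - l)) • pBigCell H l)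
    ↔
    (∀ j k m : ℕ, 1 ≤ j → 1 ≤ k → 1 ≤ m →
      H (j + k) m - H j (m + k) - H k (j + m)
        + ∑ l ∈ Finset.Ico 1 j, H k (j - l) * H l m
        + ∑ l ∈ Finset.Ico 1 k, H j (k - l) * H l m
        - ∑ l ∈ Finset.Ico 1 m, H k (m - l) * H j l = 0) := by
  change (∀ j k, pBigCell H j * pBigCell H k = BigCell.structSum H j k) ↔
    ∀ j k m, 0 < j → 0 < k → 0 < m → BigCell.assocDefect H j k m = 0
  constructor
  · intro hclosure j k m _ _ hm
    rw [← BigCell.coeff_structSum_sub_coeff_mul H (h0 m hm) hm, hclosure, sub_self]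
  · intro hE j k
    ext n
    rcases le_or_gt n 0 with hn | hn
    · obtain ⟨t, rfl⟩ := Int.exists_eq_neg_ofNat hn
      rw [BigCell.coeff_pBigCell_mul_neg, BigCell.coeff_structSum_neg]
    · lift n to ℕ using hn.le
      have hn : 0 < n := by exact_mod_cast hn
      have hdefect : BigCell.assocDefect H j k n = 0 := by
        rcases Nat.eq_zero_or_pos j with rfl | hj
        · exact BigCell.assocDefect_zero_left h0 hn k
        rcases Nat.eq_zero_or_pos k with rfl | hk
        · exact BigCell.assocDefect_zero_right h0 hn j
        exact hE j k n hj hk hn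
      rw [← BigCell.coeff_structSum_sub_coeff_mul H (h0 n hn) hn, sub_eq_zero] at hdefect
      exact hdefect.symm
end

section
/- Let A, B, C \in \mathbb{C}[x] be polynomials such that A(p_3) + B(p_3) p_4 + C(p_3) p_5 = 0 identically, where p_i(z) = z^i + H^i_{-2}z^2 + H^i_{-1}z + \sum_{k\ge1} H^i_k z^{-k} for i = 3,4,5 are formal Laurent series. Then A = B = C = 0. -/
/-! Take the order valuation `v` of `ℂ⸨X⸩` (with `X = z⁻¹`). Then `v p₃ = -3`, `v p₄ = -4`,
`v p₅ = -5`, and since `v p₃ < 0` a nonzero `P(p₃)` has value `-3 · deg P`: the top-degree term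
dominates. Hence the three nonzero terms of `A(p₃) + B(p₃) p₄ + C(p₃) p₅` have values in the
distinct classes `0, 2, 1` mod 3. But among three elements summing to zero the least valuation is
attained twice, so all three terms vanish. -/

open Polynomial

namespace AddValuation

section

variable {R Γ₀ : Type*} [Ring R] [LinearOrderedAddCommMonoidWithTop Γ₀] (v : AddValuation R Γ₀)

theorem map_eq_of_add_eq_zero {x y : R} (h : x + y = 0) : v x = v y := by
  rw [eq_neg_of_add_eq_zero_left h, map_neg]

theorem map_add_eq_top {x y : R} (hx : v x = ⊤) (hy : v y = ⊤) : v (x + y) = ⊤ :=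
  top_le_iff.1 (by simpa only [hx, hy, min_self] using v.map_add x y)

theorem map_eq_or_map_eq_or_map_eq_of_add_add_eq_zero {x y z : R} (h : x + y + z = 0) :
    v x = v y ∨ v y = v z ∨ v x = v z := by
  by_contra! hne
  obtain ⟨hxy, hyz, hxz⟩ := hne
  have hz : v z = min (v x) (v y) := by
    rw [← map_add_of_distinct_val v hxy, map_eq_of_add_eq_zero v h]
  rcases min_choice (v x) (v y) with hm | hm <;> rw [hm] at hz
  exacts [hxz hz.symm, hyz hz.symm]

theorem map_eq_top_of_add_add_eq_zero {x y z : R} (h : x + y + z = 0)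
    (hxy : v x = v y → v x = ⊤) (hyz : v y = v z → v y = ⊤) (hxz : v x = v z → v x = ⊤) :
    v x = ⊤ ∧ v y = ⊤ ∧ v z = ⊤ := by
  have hx : v x = v (y + z) := v.map_eq_of_add_eq_zero (by rw [← add_assoc, h])
  have hy : v y = v (x + z) := v.map_eq_of_add_eq_zero (by rw [← h]; abel)
  have hz : v z = v (x + y) := (v.map_eq_of_add_eq_zero h).symm
  rcases v.map_eq_or_map_eq_or_map_eq_of_add_add_eq_zero h with e | e | e
  · have hx' := hxy e
    have hy' := e ▸ hx'
    exact ⟨hx', hy', hz ▸ v.map_add_eq_top hx' hy'⟩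
  · have hy' := hyz e
    have hz' := e ▸ hy'
    exact ⟨hx ▸ v.map_add_eq_top hy' hz', hy', hz'⟩
  · have hx' := hxz e
    have hz' := e ▸ hx'
    exact ⟨hx', hy ▸ v.map_add_eq_top hx' hz', hz'⟩

end

section

variable {R K Γ : Type*} [Ring R] [CommSemiring K] [Algebra K R]
  [AddCommGroup Γ] [LinearOrder Γ] [IsOrderedAddMonoid Γ] (v : AddValuation R (WithTop Γ))

theorem map_aeval_of_neg (hK : ∀ c : K, c ≠ 0 → v (algebraMap K R c) = 0) {x : R} {g : Γ}
    (hx : v x = g) (hg : g < 0) {P : K[X]} (hP : P ≠ 0) :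
    v (aeval x P) = (P.natDegree • g : Γ) := by
  have hterm : ∀ i, P.coeff i ≠ 0 → v (P.coeff i • x ^ i) = (i • g : Γ) := by
    intro i hi
    rw [Algebra.smul_def, map_mul, map_pow, hK _ hi, hx, zero_add, WithTop.coe_nsmul]
  have hlead : P.coeff P.natDegree ≠ 0 := leadingCoeff_ne_zero.2 hP
  rw [aeval_eq_sum_range, Finset.sum_range_succ, map_add_eq_of_lt_right] <;> rw [hterm _ hlead]
  refine v.map_lt_sum WithTop.coe_ne_top fun i hi => ?_
  by_cases hc : P.coeff i = 0
  · rw [hc, zero_smul, map_zero]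
    exact WithTop.coe_lt_top _
  · rw [hterm i hc, WithTop.coe_lt_coe, ← neg_lt_neg_iff, ← smul_neg, ← smul_neg]
    exact nsmul_lt_nsmul_left (neg_pos.2 hg) (Finset.mem_range.1 hi)

theorem map_aeval_mul_ne_top (hK : ∀ c : K, c ≠ 0 → v (algebraMap K R c) = 0) {x q : R}
    {g : Γ} (hx : v x = g) (hg : g < 0) (hq : v q ≠ ⊤) {P : K[X]} (hP : P ≠ 0) :
    v (aeval x P * q) ≠ ⊤ := by
  rw [map_mul, v.map_aeval_of_neg hK hx hg hP]
  exact WithTop.add_ne_top.2 ⟨WithTop.coe_ne_top, hq⟩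

end

theorem map_aeval_mul_eq_top_of_map_eq {R K : Type*} [Ring R] [CommSemiring K] [Algebra K R]
    (v : AddValuation R (WithTop ℤ))
    (hK : ∀ c : K, c ≠ 0 → v (algebraMap K R c) = 0) {x q r : R} {g k l : ℤ} (hx : v x = g)
    (hg : g < 0) (hq : v q = k) (hr : v r = l) (hkl : ¬ k ≡ l [ZMOD g]) {P Q : K[X]}
    (h : v (aeval x P * q) = v (aeval x Q * r)) : v (aeval x P * q) = ⊤ := by
  by_cases hP : P = 0
  · simp [hP]
  by_cases hQ : Q = 0
  · simp [h, hQ]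
  rw [map_mul, map_mul, v.map_aeval_of_neg hK hx hg hP, v.map_aeval_of_neg hK hx hg hQ, hq, hr]
    at h
  have h' : P.natDegree • g + k = Q.natDegree • g + l := by exact_mod_cast h
  refine absurd (Int.modEq_iff_dvd.2 ⟨P.natDegree - Q.natDegree, ?_⟩) hkl
  simp only [nsmul_eq_mul] at h'
  linarith

end AddValuation

namespace HahnSeries

theorem orderTop_single_add_single_add_single_add_ofPowerSeries {R : Type*} [Semiring R]
    [Nontrivial R] {N : ℤ} (hN : N < -2) (a b : R) (f : PowerSeries R) :
    (single N 1 + single (-2) a + single (-1) b + ofPowerSeries ℤ R f).orderTop =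
      (N : WithTop ℤ) := by
  have htail : ((-2 : ℤ) : WithTop ℤ) ≤
      (single (-2) a + (single (-1) b + ofPowerSeries ℤ R f)).orderTop := by
    refine le_orderTop_iff_forall.2 fun j hj => ?_
    have hj : j < -2 := by exact_mod_cast hj
    simp [coeff_single_of_ne, PowerSeries.coeff_coe, hj.ne, show j ≠ -1 by omega,
      show j < 0 by omega]
  rw [add_assoc, add_assoc, orderTop_add_eq_left] <;> rw [orderTop_single one_ne_zero]
  exact (WithTop.coe_lt_coe.2 hN).trans_le htail

theorem addVal_algebraMap {R : Type*} [CommRing R] [IsDomain R] {c : R} (hc : c ≠ 0) :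
    addVal ℤ R (algebraMap R (LaurentSeries R) c) = 0 := by
  rw [algebraMap_apply']
  simp [hc]

end HahnSeries

/-- if `A(p₃) + B(p₃) p₄ + C(p₃) p₅ = 0` identically for the Laurent series
`p_i(z) = z^i + H^i_{-2} z² + H^i_{-1} z + ∑_{k≥1} H^i_k z^{-k}` (`i = 3,4,5`),
then `A = B = C = 0`.  (Laurent series are encoded in the variable `X = z⁻¹`.) -/
theorem stratum12_independence
    (H3m2 H3m1 H4m2 H4m1 H5m2 H5m1 : ℂ) (H3 H4 H5 : ℕ → ℂ)
    (p3 p4 p5 : LaurentSeries ℂ)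
    (hp3 : p3 = HahnSeries.single (-3 : ℤ) 1 + HahnSeries.single (-2 : ℤ) H3m2 +
      HahnSeries.single (-1 : ℤ) H3m1 +
      HahnSeries.ofPowerSeries ℤ ℂ (PowerSeries.mk fun k => if k = 0 then 0 else H3 k))
    (hp4 : p4 = HahnSeries.single (-4 : ℤ) 1 + HahnSeries.single (-2 : ℤ) H4m2 +
      HahnSeries.single (-1 : ℤ) H4m1 +
      HahnSeries.ofPowerSeries ℤ ℂ (PowerSeries.mk fun k => if k = 0 then 0 else H4 k))
    (hp5 : p5 = HahnSeries.single (-5 : ℤ) 1 + HahnSeries.single (-2 : ℤ) H5m2 +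
      HahnSeries.single (-1 : ℤ) H5m1 +
      HahnSeries.ofPowerSeries ℤ ℂ (PowerSeries.mk fun k => if k = 0 then 0 else H5 k))
    (A B C : Polynomial ℂ)
    (h : Polynomial.aeval p3 A + Polynomial.aeval p3 B * p4 + Polynomial.aeval p3 C * p5 = 0) :
    A = 0 ∧ B = 0 ∧ C = 0 := by
  set v := HahnSeries.addVal ℤ ℂ
  have hK (c : ℂ) (hc : c ≠ 0) : v (algebraMap ℂ (LaurentSeries ℂ) c) = 0 :=
    HahnSeries.addVal_algebraMap hc
  have hv (p : LaurentSeries ℂ) (N : ℤ) (hN : N < -2) (a b : ℂ) (f : PowerSeries ℂ)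
      (hp : p = HahnSeries.single N 1 + HahnSeries.single (-2) a + HahnSeries.single (-1) b +
        HahnSeries.ofPowerSeries ℤ ℂ f) : v p = N := by
    rw [HahnSeries.addVal_apply, hp,
      HahnSeries.orderTop_single_add_single_add_single_add_ofPowerSeries hN]
  have hv1 : v 1 = ((0 : ℤ) : WithTop ℤ) := v.map_one
  have hv3 := hv p3 (-3) (by norm_num) _ _ _ hp3
  have hv4 := hv p4 (-4) (by norm_num) _ _ _ hp4
  have hv5 := hv p5 (-5) (by norm_num) _ _ _ hp5
  rw [← mul_one (aeval p3 A)] at h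
  obtain ⟨hA, hB, hC⟩ := v.map_eq_top_of_add_add_eq_zero h
    (v.map_aeval_mul_eq_top_of_map_eq hK hv3 (by norm_num) hv1 hv4 (by decide))
    (v.map_aeval_mul_eq_top_of_map_eq hK hv3 (by norm_num) hv4 hv5 (by decide))
    (v.map_aeval_mul_eq_top_of_map_eq hK hv3 (by norm_num) hv1 hv5 (by decide))
  have hzero {P : ℂ[X]} {q : LaurentSeries ℂ} {k : ℤ} (hq : v q = k)
      (hvP : v (aeval p3 P * q) = ⊤) : P = 0 := by
    by_contra hP
    exact v.map_aeval_mul_ne_top hK hv3 (by norm_num) (hq ▸ WithTop.coe_ne_top) hP hvP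
  exact ⟨hzero hv1 hA, hzero hv4 hB, hzero hv5 hC⟩
end
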